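/- arXiv:1303.6327 — 5 statements merged into one kernel-verified Lean document; each statement's English description precedes it below -/
import Mathlib

section
/- For every integer n ≥ 3, with ζ = 2π/n, one has the strict inequality ∑_{j=1}^{n-1} 1/sin^{α-1}(jζ/2) < ∑_{j=1}^{n} 1/sin^{α-1}((j-1/2)ζ/2) for all α > 1. -/
open Real Finset

private lemma sin_mono_aux {a b : ℝ} (ha : 0 ≤ a) (hab : a ≤ b) (hb : b ≤ Real.pi / 2) :
    Real.sin a ≤ Real.sin b := by
  have hπ := Real.pi_pos
  exact Real.strictMonoOn_sin.monotoneOn ⟨by linarith, by linarith⟩ ⟨by linarith, hb⟩ hab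

theorem sum_sin_strict_ineq (n : ℕ) (hn : 3 ≤ n) (α : ℝ) (hα : 1 < α) :
    ∑ j ∈ Finset.Icc 1 (n - 1),
        1 / Real.sin ((j : ℝ) * (2 * Real.pi / n) / 2) ^ (α - 1)
      < ∑ j ∈ Finset.Icc 1 n,
        1 / Real.sin (((j : ℝ) - 1 / 2) * (2 * Real.pi / n) / 2) ^ (α - 1) := by
  have hπ := Real.pi_pos
  have hn' : (3:ℝ) ≤ n := by exact_mod_cast hn
  have hn0 : (0:ℝ) < n := by linarith
  set h : ℕ → ℝ := fun j => 1 / Real.sin (((j : ℝ) - 1 / 2) * (2 * Real.pi / n) / 2) ^ (α - 1)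
    with hhdef
  set e : ℕ → ℕ := fun j => if 2 * j ≤ n then j else j + 1 with hedef
  have hang : ∀ x : ℝ, x * (2 * Real.pi / n) / 2 = x * Real.pi / n := by intro x; ring
  have hαpos : (0:ℝ) ≤ α - 1 := by linarith
  -- positivity of h on Icc 1 n
  have hpos : ∀ j ∈ Finset.Icc 1 n, 0 < h j := by
    intro j hj
    simp only [Finset.mem_Icc] at hj
    have hj1 : (1:ℝ) ≤ j := by exact_mod_cast hj.1
    have hjn : (j:ℝ) ≤ n := by exact_mod_cast hj.2
    have h0 : 0 < ((j : ℝ) - 1 / 2) * (2 * Real.pi / n) / 2 := by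
      rw [hang]; exact div_pos (mul_pos (by linarith) hπ) hn0
    have h1 : ((j : ℝ) - 1 / 2) * (2 * Real.pi / n) / 2 < Real.pi := by
      rw [hang, div_lt_iff₀ hn0]; nlinarith
    have hs := Real.sin_pos_of_pos_of_lt_pi h0 h1
    simp only [hhdef]
    positivity
  -- termwise comparison
  have key : ∀ j ∈ Finset.Icc 1 (n - 1),
      1 / Real.sin ((j : ℝ) * (2 * Real.pi / n) / 2) ^ (α - 1) ≤ h (e j) := by
    intro j hj
    simp only [Finset.mem_Icc] at hj
    have hj1 : (1:ℝ) ≤ j := by exact_mod_cast hj.1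
    have hjn : (j:ℝ) ≤ n - 1 := by
      have : (j:ℝ) ≤ ((n - 1 : ℕ) : ℝ) := by exact_mod_cast hj.2
      rwa [Nat.cast_sub (by omega), Nat.cast_one] at this
    by_cases hc : 2 * j ≤ n
    · -- e j = j, increasing case: angles ≤ π/2
      have hcr : 2 * (j:ℝ) ≤ n := by exact_mod_cast hc
      simp only [hedef, hhdef, if_pos hc]
      rw [hang, hang]
      have ha0 : (0:ℝ) ≤ ((j:ℝ) - 1/2) * Real.pi / n :=
        div_nonneg (mul_nonneg (by linarith) hπ.le) hn0.le
      have hab : ((j:ℝ) - 1/2) * Real.pi / n ≤ (j:ℝ) * Real.pi / n := by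
        apply div_le_div_of_nonneg_right _ hn0.le
        nlinarith
      have hb : (j:ℝ) * Real.pi / n ≤ Real.pi / 2 := by
        rw [div_le_div_iff₀ hn0 (by norm_num : (0:ℝ) < 2)]
        nlinarith
      have hs1 : 0 < Real.sin (((j:ℝ) - 1/2) * Real.pi / n) := by
        apply Real.sin_pos_of_pos_of_lt_pi (div_pos (mul_pos (by linarith) hπ) hn0)
        rw [div_lt_iff₀ hn0]; nlinarith
      have hsle : Real.sin (((j:ℝ) - 1/2) * Real.pi / n) ≤ Real.sin ((j:ℝ) * Real.pi / n) :=
        sin_mono_aux ha0 hab hb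
      have hr1 : 0 < Real.sin (((j:ℝ) - 1/2) * Real.pi / n) ^ (α - 1) :=
        Real.rpow_pos_of_pos hs1 _
      have hrle : Real.sin (((j:ℝ) - 1/2) * Real.pi / n) ^ (α - 1)
          ≤ Real.sin ((j:ℝ) * Real.pi / n) ^ (α - 1) :=
        Real.rpow_le_rpow hs1.le hsle hαpos
      exact one_div_le_one_div_of_le hr1 hrle
    · -- e j = j + 1, decreasing case: angles ≥ π/2
      have hcr : (n:ℝ) < 2 * (j:ℝ) := by
        have : n < 2 * j := by omega
        exact_mod_cast this
      simp only [hedef, hhdef, if_neg hc]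
      push_cast
      rw [hang, hang]
      have hjj : ((j:ℝ) + 1 - 1/2) = (j:ℝ) + 1/2 := by ring
      rw [hjj]
      -- use sin x = sin (π - x)
      have hx : Real.sin ((j:ℝ) * Real.pi / n) = Real.sin (Real.pi - (j:ℝ) * Real.pi / n) :=
        (Real.sin_pi_sub _).symm
      have hy : Real.sin (((j:ℝ) + 1/2) * Real.pi / n)
          = Real.sin (Real.pi - ((j:ℝ) + 1/2) * Real.pi / n) := (Real.sin_pi_sub _).symm
      have ha0 : (0:ℝ) ≤ Real.pi - ((j:ℝ) + 1/2) * Real.pi / n := by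
        rw [sub_nonneg, div_le_iff₀ hn0]; nlinarith
      have hab : Real.pi - ((j:ℝ) + 1/2) * Real.pi / n ≤ Real.pi - (j:ℝ) * Real.pi / n := by
        have : (j:ℝ) * Real.pi / n ≤ ((j:ℝ) + 1/2) * Real.pi / n := by
          apply div_le_div_of_nonneg_right _ hn0.le; nlinarith
        linarith
      have hb : Real.pi - (j:ℝ) * Real.pi / n ≤ Real.pi / 2 := by
        rw [sub_le_iff_le_add, div_add_div _ _ (by norm_num : (2:ℝ) ≠ 0) hn0.ne']
        rw [le_div_iff₀ (by positivity)]
        nlinarith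
      have hs1 : 0 < Real.sin (((j:ℝ) + 1/2) * Real.pi / n) := by
        apply Real.sin_pos_of_pos_of_lt_pi (by positivity)
        rw [div_lt_iff₀ hn0]; nlinarith
      have hsle : Real.sin (((j:ℝ) + 1/2) * Real.pi / n) ≤ Real.sin ((j:ℝ) * Real.pi / n) := by
        rw [hx, hy]; exact sin_mono_aux ha0 hab hb
      have hr1 : 0 < Real.sin (((j:ℝ) + 1/2) * Real.pi / n) ^ (α - 1) :=
        Real.rpow_pos_of_pos hs1 _
      have hrle : Real.sin (((j:ℝ) + 1/2) * Real.pi / n) ^ (α - 1)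
          ≤ Real.sin ((j:ℝ) * Real.pi / n) ^ (α - 1) :=
        Real.rpow_le_rpow hs1.le hsle hαpos
      exact one_div_le_one_div_of_le hr1 hrle
  -- injectivity of e on Icc 1 (n-1)
  have hinj : ∀ x ∈ Finset.Icc 1 (n - 1), ∀ y ∈ Finset.Icc 1 (n - 1), e x = e y → x = y := by
    intro x hx y hy hxy
    simp only [hedef] at hxy
    split_ifs at hxy <;> omega
  -- image misses n/2 + 1
  have hm : n / 2 + 1 ∈ Finset.Icc 1 n := by
    simp only [Finset.mem_Icc]; omega
  have hsub : (Finset.Icc 1 (n - 1)).image e ⊆ (Finset.Icc 1 n).erase (n / 2 + 1) := by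
    intro k hk
    obtain ⟨j, hj, rfl⟩ := Finset.mem_image.mp hk
    simp only [Finset.mem_Icc] at hj
    simp only [Finset.mem_erase, Finset.mem_Icc, hedef]
    split_ifs <;> omega
  calc ∑ j ∈ Finset.Icc 1 (n - 1),
        1 / Real.sin ((j : ℝ) * (2 * Real.pi / n) / 2) ^ (α - 1)
      ≤ ∑ j ∈ Finset.Icc 1 (n - 1), h (e j) := Finset.sum_le_sum key
    _ = ∑ j ∈ (Finset.Icc 1 (n - 1)).image e, h j := (Finset.sum_image hinj).symm
    _ ≤ ∑ j ∈ (Finset.Icc 1 n).erase (n / 2 + 1), h j := by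
        apply Finset.sum_le_sum_of_subset_of_nonneg hsub
        intro i hi _
        exact (hpos i (Finset.mem_of_mem_erase hi)).le
    _ < ∑ j ∈ Finset.Icc 1 n, h j := by
        have heq := Finset.add_sum_erase (Finset.Icc 1 n) h hm
        have := hpos _ hm
        linarith
end

section
/- In the restricted three-body problem with primaries of masses μ and 1-μ at the triangular Lagrangian (equilateral) points, the Hessian of the planar effective potential has trace T = α + 1 and determinant D = 3(α+1)²μ(1-μ)/4, where φ_α'(x) = -1/x^α. Consequently, the bifurcation conditions T < 4 and (2 - T/2)² > D hold if and only if α < 3 and (3-α)² > 3(α+1)²μ(1-μ). -/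
theorem triangular_lagrange_hessian (α μ : ℝ) (hα : 1 < α) (hμ : 0 < μ)
    (hμ1 : μ < 1) :
    let v₁ : Fin 2 → ℝ := ![-(1 / 2), Real.sqrt 3 / 2]
    let v₂ : Fin 2 → ℝ := ![1 / 2, Real.sqrt 3 / 2]
    let A₁ : Matrix (Fin 2) (Fin 2) ℝ := (α + 1) • Matrix.vecMulVec v₁ v₁ - 1
    let A₂ : Matrix (Fin 2) (Fin 2) ℝ := (α + 1) • Matrix.vecMulVec v₂ v₂ - 1
    let H : Matrix (Fin 2) (Fin 2) ℝ := 1 + μ • A₁ + (1 - μ) • A₂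
    H.trace = α + 1 ∧ H.det = 3 * (α + 1) ^ 2 * μ * (1 - μ) / 4 ∧
      ((H.trace < 4 ∧ (2 - H.trace / 2) ^ 2 > H.det) ↔
        (α < 3 ∧ (3 - α) ^ 2 > 3 * (α + 1) ^ 2 * μ * (1 - μ))) := by
  intro v₁ v₂ A₁ A₂ H
  have hs : Real.sqrt 3 * Real.sqrt 3 = 3 :=
    Real.mul_self_sqrt (by norm_num)
  have hT : H.trace = α + 1 := by
    simp only [H, A₁, A₂, v₁, v₂, Matrix.trace_fin_two, Matrix.add_apply,
      Matrix.smul_apply, Matrix.sub_apply, Matrix.one_apply, Matrix.vecMulVec_apply,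
      Matrix.cons_val_zero, Matrix.cons_val_one, Matrix.head_cons, smul_eq_mul]
    linear_combination (α + 1) / 4 * hs
  have hD : H.det = 3 * (α + 1) ^ 2 * μ * (1 - μ) / 4 := by
    simp only [H, A₁, A₂, v₁, v₂, Matrix.det_fin_two, Matrix.add_apply,
      Matrix.smul_apply, Matrix.sub_apply, Matrix.one_apply, Matrix.vecMulVec_apply,
      Matrix.cons_val_zero, Matrix.cons_val_one, Matrix.head_cons, smul_eq_mul]
    linear_combination (α + 1) ^ 2 * μ * (1 - μ) / 4 * hs
  refine ⟨hT, hD, ?_⟩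
  rw [hT, hD]
  constructor
  · rintro ⟨h1, h2⟩
    refine ⟨by linarith, by nlinarith⟩
  · rintro ⟨h1, h2⟩
    refine ⟨by linarith, by nlinarith⟩
end

section
/- Let α ∈ (15 - 8√3, 3) and l ≥ 1 an integer. Set a = (4l² + (α-1)/2)² - (α+1)²/4 and b = 4l² - (α-1)/2. Then b² - a = (α+1)²/4 - 8(α-1)l² < 0, hence the quadratic equation a·t² - 2b·t + 1 = 0 has no real solutions t. -/
theorem collinear_nonresonance (α : ℝ) (hα : α ∈ Set.Ioo (15 - 8 * Real.sqrt 3) 3)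
    (l : ℕ) (hl : 1 ≤ l) :
    let a : ℝ := (4 * l ^ 2 + (α - 1) / 2) ^ 2 - (α + 1) ^ 2 / 4
    let b : ℝ := 4 * l ^ 2 - (α - 1) / 2
    b ^ 2 - a = (α + 1) ^ 2 / 4 - 8 * (α - 1) * l ^ 2 ∧ b ^ 2 - a < 0 ∧
      ∀ t : ℝ, a * t ^ 2 - 2 * b * t + 1 ≠ 0 := by
  obtain ⟨h1, h2⟩ := hα
  have hs : Real.sqrt 3 ^ 2 = 3 := Real.sq_sqrt (by norm_num)
  have hl2 : (1 : ℝ) ≤ (l : ℝ) ^ 2 := by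
    have : (1 : ℝ) ≤ (l : ℝ) := by exact_mod_cast hl
    nlinarith
  have hα1 : 1 < α := by nlinarith [Real.sqrt_nonneg 3]
  have hkey : (α + 1) ^ 2 / 4 - 8 * (α - 1) * (l : ℝ) ^ 2 < 0 := by
    have h32 : (α + 1) ^ 2 < 32 * (α - 1) := by nlinarith
    nlinarith [mul_le_mul_of_nonneg_left hl2 (by linarith : (0:ℝ) ≤ 8 * (α - 1))]
  intro a b
  have heq : b ^ 2 - a = (α + 1) ^ 2 / 4 - 8 * (α - 1) * (l : ℝ) ^ 2 := by
    simp only [a, b]; ring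
  refine ⟨heq, heq ▸ hkey, ?_⟩
  intro t h
  have hba : b ^ 2 < a := by nlinarith [heq ▸ hkey]
  have ha : 0 < a := lt_of_le_of_lt (sq_nonneg b) hba
  nlinarith [sq_nonneg (a * t - b), sq_nonneg t]
end

section
/- Let β ∈ (0, 2), r ∈ (0, 1), φ ∈ ℝ, n ≥ 1, ζ = 2π/n. Then ∑_{j=1}^{n} ‖r - e^{i(jζ - φ)}‖^{-β} = (n/π)·sin(πβ/2)·∫_0^1 (τ^{-1} - 1)^{-β/2} · f(τ) dτ, where f(τ) = [1/(τ(1 - r²τ)^{β/2})] · (1 - (rτ)^{2n})/‖1 - (τ r e^{-iφ})^n‖². -/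
open Complex MeasureTheory

section L12
open Finset

lemma omega_pow_eq_one_iff (n : ℕ) (hn : 1 ≤ n) (m : ℕ) :
    Complex.exp (Complex.I * (2 * Real.pi / n)) ^ m = 1 ↔ n ∣ m := by
  have hπ : (Real.pi : ℂ) ≠ 0 := by exact_mod_cast Real.pi_ne_zero
  have hn0 : (n : ℂ) ≠ 0 := Nat.cast_ne_zero.2 (by omega)
  rw [← Complex.exp_nat_mul, Complex.exp_eq_one_iff]
  constructor
  · rintro ⟨k, hk⟩
    have hne : Complex.I * (2 * Real.pi / n) ≠ 0 := by
      apply mul_ne_zero Complex.I_ne_zero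
      apply div_ne_zero (by simpa using hπ) hn0
    have hc : (k : ℂ) * (2 * Real.pi * Complex.I)
        = ((k * n : ℤ) : ℂ) * (Complex.I * (2 * Real.pi / n)) := by
      push_cast; field_simp
    rw [hc] at hk
    have hm : (m : ℂ) = ((k * n : ℤ) : ℂ) := mul_right_cancel₀ hne hk
    have hm' : (m : ℤ) = k * n := by exact_mod_cast hm
    have : (n : ℤ) ∣ (m : ℤ) := ⟨k, by linarith⟩
    exact_mod_cast this
  · rintro ⟨k, rfl⟩
    refine ⟨k, ?_⟩
    push_cast
    field_simp

lemma geom_Icc (w : ℂ) (n : ℕ) (hw : w ^ n = 1) :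
    ∑ j ∈ Icc 1 n, w ^ j = if w = 1 then (n : ℂ) else 0 := by
  have h1 : ∑ j ∈ Icc 1 n, w ^ j = w * ∑ j ∈ range n, w ^ j := by
    rw [show Icc 1 n = Ico 1 (n + 1) by rw [Finset.Ico_add_one_right_eq_Icc], Finset.sum_Ico_eq_sum_range,
      Finset.mul_sum]
    simp [pow_add, pow_succ', mul_comm]
  split_ifs with h
  · subst h; simp [h1]
  · rw [h1, geom_sum_eq h, hw]; simp

lemma sum_inv_one_sub_omega (a : ℂ) (n : ℕ) (hn : 1 ≤ n) (ha : ‖a‖ < 1) :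
    ∑ j ∈ Icc 1 n, (1 - a * Complex.exp (Complex.I * (2 * Real.pi / n)) ^ j)⁻¹
      = n / (1 - a ^ n) := by
  set ω := Complex.exp (Complex.I * (2 * Real.pi / n)) with hω
  have hωabs : ‖ω‖ = 1 := by
    rw [hω]
    rw [show Complex.I * (2 * Real.pi / n) = (((2 * Real.pi / n : ℝ)) : ℂ) * Complex.I by
      push_cast; ring]
    exact Complex.norm_exp_ofReal_mul_I _
  have hnorm : ∀ j : ℕ, ‖a * ω ^ j‖ < 1 := by
    intro j
    have : ‖a * ω ^ j‖ = ‖a‖ := by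
      simp [norm_mul, norm_pow, hωabs]
    rw [this]; exact ha
  have hsummable : ∀ j ∈ Icc 1 n, Summable (fun m : ℕ => (a * ω ^ j) ^ m) :=
    fun j _ => summable_geometric_of_norm_lt_one (hnorm j)
  have step1 : ∑ j ∈ Icc 1 n, (1 - a * ω ^ j)⁻¹
      = ∑ j ∈ Icc 1 n, ∑' m : ℕ, (a * ω ^ j) ^ m := by
    refine Finset.sum_congr rfl fun j _ => ?_
    rw [tsum_geometric_of_norm_lt_one (hnorm j)]
  have step2 : ∑ j ∈ Icc 1 n, ∑' m : ℕ, (a * ω ^ j) ^ m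
      = ∑' m : ℕ, ∑ j ∈ Icc 1 n, (a * ω ^ j) ^ m := (Summable.tsum_finsetSum hsummable).symm
  have step3 : ∀ m : ℕ, ∑ j ∈ Icc 1 n, (a * ω ^ j) ^ m
      = if n ∣ m then (n : ℂ) * a ^ m else 0 := by
    intro m
    have : ∀ j, (a * ω ^ j) ^ m = a ^ m * (ω ^ m) ^ j := by
      intro j; rw [mul_pow, ← pow_mul, ← pow_mul, mul_comm j m]
    simp_rw [this, ← Finset.mul_sum]
    rw [geom_Icc (ω ^ m) n (by rw [← pow_mul, mul_comm, pow_mul, (omega_pow_eq_one_iff n hn n).2 dvd_rfl, one_pow])]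
    by_cases hd : n ∣ m
    · simp [show ω ^ m = 1 from (omega_pow_eq_one_iff n hn m).2 hd, hd, mul_comm]
    · have : ω ^ m ≠ 1 := fun h => hd ((omega_pow_eq_one_iff n hn m).1 h)
      simp [this, hd]
  have step4 : ∑' m : ℕ, (if n ∣ m then (n : ℂ) * a ^ m else 0)
      = (n : ℂ) * ∑' k : ℕ, (a ^ n) ^ k := by
    have hinj : Function.Injective (fun k : ℕ => n * k) :=
      fun x y h => Nat.eq_of_mul_eq_mul_left (by omega) h
    have h0 : (Function.support fun m : ℕ => if n ∣ m then (n : ℂ) * a ^ m else 0)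
        ⊆ Set.range (fun k : ℕ => n * k) := by
      intro m hm
      simp only [Function.mem_support] at hm
      have : n ∣ m := by by_contra h; simp [h] at hm
      obtain ⟨k, rfl⟩ := this
      exact ⟨k, rfl⟩
    calc ∑' m : ℕ, (if n ∣ m then (n : ℂ) * a ^ m else 0)
        = ∑' k : ℕ, (if n ∣ n * k then (n : ℂ) * a ^ (n * k) else 0) :=
          (Function.Injective.tsum_eq hinj
            (f := fun m : ℕ => if n ∣ m then (n : ℂ) * a ^ m else 0) h0).symm
      _ = ∑' k : ℕ, (n : ℂ) * (a ^ n) ^ k :=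
          tsum_congr fun k => by simp [dvd_mul_right, pow_mul]
      _ = (n : ℂ) * ∑' k : ℕ, (a ^ n) ^ k := tsum_mul_left
  have step5 : ∑' k : ℕ, (a ^ n) ^ k = (1 - a ^ n)⁻¹ := by
    apply tsum_geometric_of_norm_lt_one
    rw [norm_pow]
    exact pow_lt_one₀ (norm_nonneg a) ha (by omega)
  rw [step1, step2]
  simp_rw [step3]
  rw [step4, step5, div_eq_mul_inv]

lemma re_one_add_div_one_sub (z : ℂ) (hz : ‖z‖ < 1) :
    ((1 + z) / (1 - z)).re = (1 - ‖z‖ ^ 2) / ‖1 - z‖ ^ 2 := by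
  rw [Complex.div_re]
  rw [Complex.sq_norm, Complex.sq_norm]
  simp [Complex.normSq_apply]
  ring

lemma sum_inv_sq_abs (a : ℂ) (n : ℕ) (hn : 1 ≤ n) (ha : ‖a‖ < 1) :
    ∑ j ∈ Icc 1 n, (‖1 - a * Complex.exp (Complex.I * (2 * Real.pi / n)) ^ j‖ ^ 2)⁻¹
      = n * (1 - ‖a‖ ^ (2 * n)) /
          ((1 - ‖a‖ ^ 2) * ‖1 - a ^ n‖ ^ 2) := by
  set ω := Complex.exp (Complex.I * (2 * Real.pi / n)) with hω
  have hωabs : ‖ω‖ = 1 := by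
    rw [hω, show Complex.I * (2 * Real.pi / n) = (((2 * Real.pi / n : ℝ)) : ℂ) * Complex.I by
      push_cast; ring]
    exact Complex.norm_exp_ofReal_mul_I _
  have hzabs : ∀ j : ℕ, ‖a * ω ^ j‖ = ‖a‖ := by
    intro j; simp [norm_mul, norm_pow, hωabs]
  have hzlt : ∀ j : ℕ, ‖a * ω ^ j‖ < 1 := by
    intro j; rw [hzabs]; exact ha
  have hane : ∀ j : ℕ, (1 : ℂ) - a * ω ^ j ≠ 0 := by
    intro j
    intro h
    have heq : (1:ℂ) = a * ω ^ j := by linear_combination h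
    have h2 : ‖(1:ℂ)‖ < 1 := heq ▸ hzlt j
    simp at h2
  -- each term
  have key : ∀ j : ℕ, (‖1 - a * ω ^ j‖ ^ 2)⁻¹
      = (1 - ‖a‖ ^ 2)⁻¹ * ((1 + a * ω ^ j) / (1 - a * ω ^ j)).re := by
    intro j
    rw [re_one_add_div_one_sub _ (hzlt j), hzabs j]
    have h1 : (0:ℝ) < 1 - ‖a‖ ^ 2 := by
      have := ha
      nlinarith [norm_nonneg a]
    have h2 : (0:ℝ) < ‖1 - a * ω ^ j‖ ^ 2 :=
      pow_pos (norm_pos_iff.mpr (hane j)) 2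
    field_simp
  have hanlt : ‖a ^ n‖ < 1 := by
    rw [norm_pow]; exact pow_lt_one₀ (norm_nonneg a) ha (by omega)
  have hanne : (1 : ℂ) - a ^ n ≠ 0 := by
    intro h
    have heq : (1:ℂ) = a ^ n := by linear_combination h
    have h2 : ‖(1:ℂ)‖ < 1 := heq ▸ hanlt
    simp at h2
  have hsplit : ∀ j ∈ Icc 1 n, (1 + a * ω ^ j) / (1 - a * ω ^ j)
      = 2 * (1 - a * ω ^ j)⁻¹ - 1 := by
    intro j _
    field_simp [hane j]
    ring
  have hsum : ∑ j ∈ Icc 1 n, (1 + a * ω ^ j) / (1 - a * ω ^ j)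
      = (n : ℂ) * (1 + a ^ n) / (1 - a ^ n) := by
    rw [Finset.sum_congr rfl hsplit, Finset.sum_sub_distrib, ← Finset.mul_sum,
      sum_inv_one_sub_omega a n hn ha]
    simp [Nat.card_Icc]
    field_simp
    ring
  calc ∑ j ∈ Icc 1 n, (‖1 - a * ω ^ j‖ ^ 2)⁻¹
      = (1 - ‖a‖ ^ 2)⁻¹
        * (∑ j ∈ Icc 1 n, (1 + a * ω ^ j) / (1 - a * ω ^ j)).re := by
        rw [Complex.re_sum, Finset.mul_sum]
        exact Finset.sum_congr rfl fun j _ => key j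
    _ = (1 - ‖a‖ ^ 2)⁻¹
        * ((n : ℝ) * (1 - ‖a‖ ^ (2 * n)) / ‖1 - a ^ n‖ ^ 2) := by
        rw [hsum]
        congr 1
        rw [mul_div_assoc, Complex.mul_re]
        rw [re_one_add_div_one_sub _ hanlt]
        simp [norm_pow, pow_mul']
        ring
    _ = (n : ℝ) * (1 - ‖a‖ ^ (2 * n)) /
          ((1 - ‖a‖ ^ 2) * ‖1 - a ^ n‖ ^ 2) := by
        have h1 : (0:ℝ) < 1 - ‖a‖ ^ 2 := by
          have := ha
          nlinarith [norm_nonneg a]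
        have h2 : (0:ℝ) < ‖1 - a ^ n‖ ^ 2 :=
          pow_pos (norm_pos_iff.mpr hanne) 2
        field_simp


end L12

section L3
open intervalIntegral

lemma beta_aux_congr {s : ℝ} (hs : s ∈ Set.Ioo (0:ℝ) 1) :
    ∀ᵐ x : ℝ, x ∈ Set.Ioc (0:ℝ) 1 →
      ((x : ℂ) ^ ((s:ℂ) - 1) * (1 - (x:ℂ)) ^ ((1 - (s:ℂ)) - 1)
        = ((x ^ (s-1) * (1-x) ^ (-s) : ℝ) : ℂ)) := by
  filter_upwards [] with x hx
  obtain ⟨hx0, hx1⟩ := hx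
  rw [Complex.ofReal_mul, Complex.ofReal_cpow (le_of_lt hx0),
    Complex.ofReal_cpow (by linarith : (0:ℝ) ≤ 1 - x)]
  push_cast
  rw [show (1:ℂ) - (s:ℂ) - 1 = -(s:ℂ) by ring]

lemma beta_integrable {s : ℝ} (hs : s ∈ Set.Ioo (0:ℝ) 1) :
    IntegrableOn (fun x : ℝ => x ^ (s-1) * (1-x) ^ (-s)) (Set.Ioo 0 1) := by
  obtain ⟨hs0, hs1⟩ := hs
  have hc := Complex.betaIntegral_convergent (u := (s:ℂ)) (v := 1 - s)
    (by simpa using hs0) (by simp [Complex.sub_re]; linarith)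
  rw [intervalIntegrable_iff_integrableOn_Ioc_of_le zero_le_one] at hc
  have hcongr := beta_aux_congr ⟨hs0, hs1⟩
  have h2 : IntegrableOn (fun x : ℝ => ((x ^ (s-1) * (1-x) ^ (-s) : ℝ) : ℂ))
      (Set.Ioc 0 1) := by
    exact hc.congr ((MeasureTheory.ae_restrict_iff' measurableSet_Ioc).2 hcongr)
  have h3 : IntegrableOn (fun x : ℝ => x ^ (s-1) * (1-x) ^ (-s)) (Set.Ioc 0 1) := by
    have := h2.re
    simp at this; exact this
  exact h3.mono_set Set.Ioo_subset_Ioc_self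

lemma beta_value {s : ℝ} (hs : s ∈ Set.Ioo (0:ℝ) 1) :
    ∫ x in Set.Ioo (0:ℝ) 1, x ^ (s-1) * (1-x) ^ (-s)
      = Real.pi / Real.sin (Real.pi * s) := by
  obtain ⟨hs0, hs1⟩ := hs
  have hre1 : 0 < (s:ℂ).re := by simpa using hs0
  have hre2 : 0 < ((1:ℂ) - s).re := by simp [Complex.sub_re]; linarith
  have hG := Complex.Gamma_mul_Gamma_eq_betaIntegral hre1 hre2
  rw [show (s:ℂ) + (1 - s) = 1 by ring, Complex.Gamma_one, one_mul] at hG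
  have hrefl := Complex.Gamma_mul_Gamma_one_sub (s:ℂ)
  have hbval : Complex.betaIntegral (s:ℂ) (1 - s) = ↑Real.pi / Complex.sin (↑Real.pi * s) := by
    rw [← hG, hrefl]
  have hcongr : ∫ x in (0:ℝ)..1, (x:ℂ) ^ ((s:ℂ) - 1) * (1 - (x:ℂ)) ^ ((1 - (s:ℂ)) - 1)
      = ∫ x in (0:ℝ)..1, ((x ^ (s-1) * (1-x) ^ (-s) : ℝ) : ℂ) := by
    refine intervalIntegral.integral_congr_ae ?_
    have := beta_aux_congr ⟨hs0, hs1⟩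
    filter_upwards [this] with x hx hmem
    exact hx (by rwa [Set.uIoc_of_le zero_le_one] at hmem)
  have hsin : Complex.sin (↑Real.pi * s) = ((Real.sin (Real.pi * s) : ℝ) : ℂ) := by
    rw [Complex.ofReal_sin]; push_cast; ring_nf
  have : ((∫ x in (0:ℝ)..1, x ^ (s-1) * (1-x) ^ (-s) : ℝ) : ℂ)
      = ((Real.pi / Real.sin (Real.pi * s) : ℝ) : ℂ) := by
    rw [← intervalIntegral.integral_ofReal, ← hcongr]
    rw [show (∫ x in (0:ℝ)..1, (x:ℂ) ^ ((s:ℂ) - 1) * (1 - (x:ℂ)) ^ ((1 - (s:ℂ)) - 1))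
      = Complex.betaIntegral (s:ℂ) (1 - s) from rfl]
    rw [hbval, hsin]
    push_cast
    ring
  have hreal : ∫ x in (0:ℝ)..1, x ^ (s-1) * (1-x) ^ (-s)
      = Real.pi / Real.sin (Real.pi * s) := by exact_mod_cast this
  rw [← hreal, intervalIntegral.integral_of_le zero_le_one,
    MeasureTheory.integral_Ioc_eq_integral_Ioo]

end L3

section L4
open Set

lemma subst_main {r b s : ℝ} (hr : r ∈ Set.Ioo (0:ℝ) 1) (hb : |b| ≤ 2*r)
    (hs : s ∈ Set.Ioo (0:ℝ) 1) :
    IntegrableOn (fun τ : ℝ => τ^(s-1) * (1-τ)^(-s) * (1-r^2*τ)^(-s) * (1-r^2*τ^2)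
        / (1 - b*τ + r^2*τ^2)) (Set.Ioo 0 1)
    ∧ (∫ τ in Set.Ioo (0:ℝ) 1, τ^(s-1) * (1-τ)^(-s) * (1-r^2*τ)^(-s) * (1-r^2*τ^2)
        / (1 - b*τ + r^2*τ^2))
      = (1 + r^2 - b)^(-s) * (Real.pi / Real.sin (Real.pi * s)) := by
  obtain ⟨hr0, hr1⟩ := hr
  obtain ⟨hs0, hs1⟩ := hs
  obtain ⟨hble, hbge⟩ := abs_le.1 hb
  set D : ℝ → ℝ := fun τ => 1 - b*τ + r^2*τ^2 with hDdef
  set c : ℝ := 1 + r^2 - b with hcdef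
  have hc : 0 < c := by rw [hcdef]; nlinarith
  have hD : ∀ τ ∈ Icc (0:ℝ) 1, 0 < D τ := by
    intro τ ⟨h0, h1⟩
    have : r * τ < 1 := by nlinarith
    rw [hDdef]
    simp only
    nlinarith [sq_nonneg (1 - r*τ)]
  set h : ℝ → ℝ := fun τ => c * τ / D τ with hhdef
  set h' : ℝ → ℝ := fun τ => c * (1 - r^2*τ^2) / (D τ)^2 with hh'def
  have hderiv : ∀ τ ∈ Ioo (0:ℝ) 1, HasDerivAt h (h' τ) τ := by
    intro τ hτ
    have hDτ : D τ ≠ 0 := (hD τ (Ioo_subset_Icc_self hτ)).ne'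
    have h1 : HasDerivAt (fun τ : ℝ => c * τ) c τ := by
      simpa using (hasDerivAt_id τ).const_mul c
    have h2 : HasDerivAt D (-b + r^2*(2*τ)) τ := by
      rw [hDdef]
      have := (((hasDerivAt_id τ).const_mul b).const_sub 1).add
        (((hasDerivAt_pow 2 τ)).const_mul (r^2))
      exact this.congr_deriv (by norm_num)
    have := h1.div h2 hDτ
    refine this.congr_deriv ?_
    rw [hh'def, hDdef]
    field_simp
    ring
  have hcont : ContinuousOn h (Icc 0 1) := by
    apply ContinuousOn.div
    · exact (continuous_const.mul continuous_id).continuousOn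
    · exact Continuous.continuousOn (by rw [hDdef]; continuity)
    · exact fun τ hτ => (hD τ hτ).ne'
  have hderivpos : ∀ τ ∈ Ioo (0:ℝ) 1, 0 < h' τ := by
    intro τ ⟨h0, h1⟩
    have hDτ := hD τ (Ioo_subset_Icc_self ⟨h0, h1⟩)
    rw [hh'def]
    have hr2 : r^2 < 1 := by nlinarith
    have hτ2 : τ^2 < 1 := by nlinarith
    have : r^2 * τ^2 < 1 :=
      lt_of_le_of_lt (mul_le_of_le_one_right (sq_nonneg r) hτ2.le) hr2
    have hnum : 0 < 1 - r^2 * τ^2 := by linarith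
    positivity
  have hmono : StrictMonoOn h (Icc 0 1) := by
    apply strictMonoOn_of_deriv_pos (convex_Icc 0 1) hcont
    intro τ hτ
    rw [interior_Icc] at hτ
    rw [(hderiv τ hτ).deriv]
    exact hderivpos τ hτ
  have h0 : h 0 = 0 := by simp [hhdef]
  have h1 : h 1 = 1 := by
    rw [hhdef]
    simp only
    rw [hDdef]
    simp only
    rw [hcdef]
    have : 1 - b * 1 + r^2 * 1^2 = 1 + r^2 - b := by ring
    rw [this]
    field_simp
    exact div_self (hcdef ▸ hc.ne')
  have himage : h '' Ioo 0 1 = Ioo 0 1 := by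
    apply Subset.antisymm
    · rintro x ⟨τ, hτ, rfl⟩
      have e0 : h 0 < h τ := hmono (left_mem_Icc.2 zero_le_one) (Ioo_subset_Icc_self hτ) hτ.1
      have e1 : h τ < h 1 := hmono (Ioo_subset_Icc_self hτ) (right_mem_Icc.2 zero_le_one) hτ.2
      rw [h0] at e0; rw [h1] at e1
      exact ⟨e0, e1⟩
    · have := intermediate_value_Ioo (zero_le_one) hcont
      rw [h0, h1] at this
      exact this
  have hinj : InjOn h (Ioo 0 1) := (hmono.mono Ioo_subset_Icc_self).injOn
  have hderivW : ∀ τ ∈ Ioo (0:ℝ) 1, HasDerivWithinAt h (h' τ) (Ioo 0 1) τ :=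
    fun τ hτ => (hderiv τ hτ).hasDerivWithinAt
  -- pointwise identity
  have hpt : ∀ τ ∈ Ioo (0:ℝ) 1,
      |h' τ| * ((h τ)^(s-1) * (1 - h τ)^(-s))
        = c^s * (τ^(s-1) * (1-τ)^(-s) * (1-r^2*τ)^(-s) * (1-r^2*τ^2) / D τ) := by
    intro τ ⟨ht0, ht1⟩
    have hDτ : 0 < D τ := hD τ (Ioo_subset_Icc_self ⟨ht0, ht1⟩)
    have h1τ : 0 < 1 - τ := by linarith
    have hr2τ : 0 < 1 - r^2*τ := by nlinarith
    have hr2τ2 : 0 < 1 - r^2*τ^2 := by nlinarith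
    have habs : |h' τ| = h' τ := abs_of_pos (hderivpos τ ⟨ht0, ht1⟩)
    have hhτ : h τ = c * τ / D τ := rfl
    have h1hτ : 1 - h τ = (1-τ) * (1-r^2*τ) / D τ := by
      rw [hhτ]
      field_simp
      rw [hDdef, hcdef]
      ring
    rw [habs, hhτ, h1hτ, hh'def]
    rw [Real.div_rpow (by positivity) hDτ.le, Real.div_rpow (by positivity) hDτ.le,
      Real.mul_rpow hc.le ht0.le, Real.mul_rpow h1τ.le hr2τ.le]
    rw [Real.rpow_sub hc, Real.rpow_one]
    rw [Real.rpow_neg hDτ.le s, Real.rpow_sub hDτ, Real.rpow_one]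
    have hDs : (D τ)^s ≠ 0 := (Real.rpow_pos_of_pos hDτ s).ne'
    have hcs : c^s ≠ 0 := (Real.rpow_pos_of_pos hc s).ne'
    field_simp
  have hkey : ∀ τ ∈ Ioo (0:ℝ) 1,
      c^(-s) * (|h' τ| • ((h τ)^(s-1) * (1 - h τ)^(-s)))
        = τ^(s-1) * (1-τ)^(-s) * (1-r^2*τ)^(-s) * (1-r^2*τ^2) / D τ := by
    intro τ hτ
    rw [smul_eq_mul, hpt τ hτ, Real.rpow_neg hc.le]
    have hcs : (0:ℝ) < c^s := Real.rpow_pos_of_pos hc s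
    field_simp
  have hbint := beta_integrable ⟨hs0, hs1⟩
  have hiff := integrableOn_image_iff_integrableOn_abs_deriv_smul measurableSet_Ioo hderivW hinj
    (fun u : ℝ => u^(s-1) * (1-u)^(-s))
  rw [himage] at hiff
  have h2 : IntegrableOn (fun τ => |h' τ| • ((h τ)^(s-1) * (1 - h τ)^(-s))) (Ioo 0 1) :=
    hiff.1 hbint
  have hval := integral_image_eq_integral_abs_deriv_smul measurableSet_Ioo hderivW hinj
    (fun u : ℝ => u^(s-1) * (1-u)^(-s))
  rw [himage, beta_value ⟨hs0, hs1⟩] at hval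
  constructor
  · refine ((h2.const_mul (c^(-s))).congr ?_)
    exact (MeasureTheory.ae_restrict_iff' measurableSet_Ioo).2 (Filter.Eventually.of_forall hkey)
  · calc (∫ τ in Ioo (0:ℝ) 1, τ^(s-1) * (1-τ)^(-s) * (1-r^2*τ)^(-s) * (1-r^2*τ^2) / D τ)
        = ∫ τ in Ioo (0:ℝ) 1, c^(-s) * (|h' τ| • ((h τ)^(s-1) * (1 - h τ)^(-s))) :=
          (MeasureTheory.setIntegral_congr_fun measurableSet_Ioo fun τ hτ => (hkey τ hτ).symm)
      _ = c^(-s) * ∫ τ in Ioo (0:ℝ) 1, |h' τ| • ((h τ)^(s-1) * (1 - h τ)^(-s)) :=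
          MeasureTheory.integral_const_mul _ _
      _ = c^(-s) * (Real.pi / Real.sin (Real.pi * s)) := by rw [← hval]


end L4

section Glue
open Finset

lemma abs_sq_one_sub_mul_exp (x t : ℝ) :
    ‖1 - (x:ℂ) * Complex.exp (Complex.I * t)‖ ^ 2
      = 1 - 2*x*Real.cos t + x^2 := by
  rw [show Complex.I * t = ((t:ℝ):ℂ) * Complex.I by push_cast; ring]
  rw [Complex.sq_norm, Complex.normSq_apply]
  simp [Complex.exp_ofReal_mul_I_re, Complex.exp_ofReal_mul_I_im, Complex.sub_re, Complex.sub_im,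
    Complex.mul_re, Complex.mul_im]
  nlinarith [Real.sin_sq_add_cos_sq t]

lemma abs_sq_sub_exp (r t : ℝ) :
    ‖(r:ℂ) - Complex.exp (Complex.I * t)‖ ^ 2
      = 1 + r^2 - 2*r*Real.cos t := by
  rw [show Complex.I * t = ((t:ℝ):ℂ) * Complex.I by push_cast; ring]
  rw [Complex.sq_norm, Complex.normSq_apply]
  simp [Complex.exp_ofReal_mul_I_re, Complex.exp_ofReal_mul_I_im, Complex.sub_re, Complex.sub_im]
  nlinarith [Real.sin_sq_add_cos_sq t]

lemma exp_factor (n : ℕ) (j : ℕ) (φ : ℝ) (hn : 1 ≤ n) :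
    Complex.exp (-Complex.I * φ) * Complex.exp (Complex.I * (2 * Real.pi / n)) ^ j
      = Complex.exp (Complex.I * ((j:ℝ) * (2 * Real.pi / n) - φ)) := by
  rw [← Complex.exp_nat_mul, ← Complex.exp_add]
  congr 1
  push_cast
  ring

lemma abs_exp_neg_I_mul (φ : ℝ) : ‖Complex.exp (-Complex.I * φ)‖ = 1 := by
  rw [show -Complex.I * φ = ((-φ:ℝ):ℂ) * Complex.I by push_cast; ring]
  exact Complex.norm_exp_ofReal_mul_I _

end Glue

lemma pointwise_id (β r φ : ℝ) (n : ℕ) (hβ : β ∈ Set.Ioo (0:ℝ) 2) (hr : r ∈ Set.Ioo (0:ℝ) 1)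
    (hn : 1 ≤ n) (τ : ℝ) (hτ : τ ∈ Set.Ioo (0:ℝ) 1) :
    (τ⁻¹ - 1) ^ (-β / 2) * (1 / (τ * (1 - r ^ 2 * τ) ^ (β / 2)) *
      ((1 - (r * τ) ^ (2 * n)) /
        (‖1 - (((τ * r : ℝ) : ℂ) * Complex.exp (-Complex.I * φ)) ^ n‖) ^ 2))
    = (n:ℝ)⁻¹ * ∑ j ∈ Finset.Icc 1 n,
        τ^(β/2-1) * (1-τ)^(-(β/2)) * (1-r^2*τ)^(-(β/2)) * (1-r^2*τ^2)
          / (1 - (2*r*Real.cos ((j:ℝ) * (2*Real.pi/n) - φ))*τ + r^2*τ^2) := by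
  obtain ⟨hβ0, hβ2⟩ := hβ
  obtain ⟨hr0, hr1⟩ := hr
  obtain ⟨ht0, ht1⟩ := hτ
  set s := β/2 with hsdef
  set a : ℂ := ((τ * r : ℝ) : ℂ) * Complex.exp (-Complex.I * φ) with hadef
  have habs : ‖a‖ = τ * r := by
    rw [hadef, norm_mul, abs_exp_neg_I_mul, Complex.norm_real, Real.norm_eq_abs,
      abs_of_pos (by positivity : (0:ℝ) < τ * r), mul_one]
  have hτr1 : τ * r < 1 := by nlinarith
  have hanorm : ‖a‖ < 1 := by rw [habs]; exact hτr1
  have h1τ : (0:ℝ) < 1 - τ := by linarith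
  have hr2τ : (0:ℝ) < 1 - r^2*τ := by nlinarith
  have hr2τ2 : (0:ℝ) < 1 - r^2*τ^2 := by nlinarith
  have hann : ‖a ^ n‖ < 1 := by
    rw [norm_pow]; exact pow_lt_one₀ (norm_nonneg a) hanorm (by omega)
  have hanne : (1 : ℂ) - a ^ n ≠ 0 := by
    intro h
    have heq : (1:ℂ) = a ^ n := by linear_combination h
    have h2 : ‖(1:ℂ)‖ < 1 := heq ▸ hann
    simp at h2
  have hA2 : (0:ℝ) < ‖1 - a ^ n‖ ^ 2 := pow_pos (norm_pos_iff.mpr hanne) 2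
  -- the sum identity
  have hsum := sum_inv_sq_abs a n hn hanorm
  rw [habs] at hsum
  have hDj : ∀ j ∈ Finset.Icc 1 n,
      (‖1 - a * Complex.exp (Complex.I * (2 * Real.pi / n)) ^ j‖ ^ 2)⁻¹
        = (1 - (2*r*Real.cos ((j:ℝ) * (2*Real.pi/n) - φ))*τ + r^2*τ^2)⁻¹ := by
    intro j _
    congr 1
    rw [hadef, mul_assoc, exp_factor n j φ hn]
    rw [show Complex.I * ((((j:ℝ)):ℂ) * (2 * (Real.pi:ℂ) / ((n:ℕ):ℂ)) - ((φ:ℝ):ℂ))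
        = Complex.I * ((((j:ℝ) * (2 * Real.pi / n) - φ : ℝ)) : ℂ) by push_cast; ring]
    rw [abs_sq_one_sub_mul_exp]
    ring
  rw [Finset.sum_congr rfl hDj] at hsum
  -- rewrite the sum in the goal
  have hgoalsum : ∑ j ∈ Finset.Icc 1 n,
      τ^(s-1) * (1-τ)^(-s) * (1-r^2*τ)^(-s) * (1-r^2*τ^2)
        / (1 - (2*r*Real.cos ((j:ℝ) * (2*Real.pi/n) - φ))*τ + r^2*τ^2)
      = τ^(s-1) * (1-τ)^(-s) * (1-r^2*τ)^(-s) * (1-r^2*τ^2)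
        * ((n:ℝ) * (1 - (τ*r)^(2*n)) / ((1 - (τ*r)^2) * ‖1 - a ^ n‖ ^ 2)) := by
    calc ∑ j ∈ Finset.Icc 1 n,
        τ^(s-1) * (1-τ)^(-s) * (1-r^2*τ)^(-s) * (1-r^2*τ^2)
          / (1 - (2*r*Real.cos ((j:ℝ) * (2*Real.pi/n) - φ))*τ + r^2*τ^2)
        = ∑ j ∈ Finset.Icc 1 n,
          (τ^(s-1) * (1-τ)^(-s) * (1-r^2*τ)^(-s) * (1-r^2*τ^2))
            * (1 - (2*r*Real.cos ((j:ℝ) * (2*Real.pi/n) - φ))*τ + r^2*τ^2)⁻¹ :=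
          Finset.sum_congr rfl fun j _ => div_eq_mul_inv _ _
      _ = (τ^(s-1) * (1-τ)^(-s) * (1-r^2*τ)^(-s) * (1-r^2*τ^2))
            * ∑ j ∈ Finset.Icc 1 n,
              (1 - (2*r*Real.cos ((j:ℝ) * (2*Real.pi/n) - φ))*τ + r^2*τ^2)⁻¹ :=
          (Finset.mul_sum _ _ _).symm
      _ = _ := by rw [hsum]
  rw [hgoalsum]
  -- rpow algebra
  have e0 : -β/2 = -s := by rw [hsdef]; ring
  have e1 : τ⁻¹ - 1 = (1-τ)/τ := by field_simp
  have e2 : ((1-τ)/τ)^(-s) = (1-τ)^(-s) * τ^s := by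
    rw [Real.div_rpow h1τ.le ht0.le, Real.rpow_neg ht0.le, div_eq_mul_inv, inv_inv]
  have e3 : τ^(s-1) = τ^s / τ := by rw [Real.rpow_sub ht0, Real.rpow_one]
  have e4 : (1-r^2*τ)^(-s) = ((1-r^2*τ)^s)⁻¹ := by rw [Real.rpow_neg hr2τ.le]
  rw [e0, e1, e2, e3, e4]
  have hτs : (0:ℝ) < τ^s := Real.rpow_pos_of_pos ht0 s
  have hRs : (0:ℝ) < (1-r^2*τ)^s := Real.rpow_pos_of_pos hr2τ s
  have hn0 : (n:ℝ) ≠ 0 := Nat.cast_ne_zero.2 (by omega)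
  have h1τr2 : (1:ℝ) - (τ*r)^2 ≠ 0 := by
    have : (τ*r)^2 = r^2*τ^2 := by ring
    rw [this]; exact hr2τ2.ne'
  field_simp
  have hB : (1:ℝ) - τ^2*r^2 ≠ 0 := by rw [show τ^2*r^2 = r^2*τ^2 by ring]; exact hr2τ2.ne'
  rw [mul_div_mul_right _ _ hB]

theorem polygonal_sum_integral_repr (β r φ : ℝ) (n : ℕ)
    (hβ : β ∈ Set.Ioo (0 : ℝ) 2) (hr : r ∈ Set.Ioo (0 : ℝ) 1) (hn : 1 ≤ n) :
    ∑ j ∈ Finset.Icc 1 n,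
        (‖(r : ℂ)
          - Complex.exp (Complex.I * ((j : ℝ) * (2 * Real.pi / n) - φ))‖) ^ (-β)
      = (n / Real.pi) * Real.sin (Real.pi * β / 2) *
          ∫ τ in (0 : ℝ)..1, (τ⁻¹ - 1) ^ (-β / 2) *
            (1 / (τ * (1 - r ^ 2 * τ) ^ (β / 2)) *
              ((1 - (r * τ) ^ (2 * n)) /
                (‖1 - (((τ * r : ℝ) : ℂ)
                  * Complex.exp (-Complex.I * φ)) ^ n‖) ^ 2)) := by
  obtain ⟨hβ0, hβ2⟩ := hβ
  obtain ⟨hr0, hr1⟩ := hr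
  have hs : β/2 ∈ Set.Ioo (0:ℝ) 1 := ⟨by linarith, by linarith⟩
  set s := β/2 with hsdef
  have hbb : ∀ j : ℕ, |2*r*Real.cos ((j:ℝ) * (2*Real.pi/n) - φ)| ≤ 2*r := by
    intro j
    rw [abs_mul, _root_.abs_of_nonneg (by positivity : (0:ℝ) ≤ 2*r)]
    calc 2*r*|Real.cos ((j:ℝ) * (2*Real.pi/n) - φ)| ≤ 2*r*1 := by
          gcongr; exact Real.abs_cos_le_one _
      _ = 2*r := mul_one _
  have hint : ∀ j : ℕ, MeasureTheory.IntegrableOn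
      (fun τ : ℝ => τ^(s-1) * (1-τ)^(-s) * (1-r^2*τ)^(-s) * (1-r^2*τ^2)
        / (1 - (2*r*Real.cos ((j:ℝ) * (2*Real.pi/n) - φ))*τ + r^2*τ^2)) (Set.Ioo 0 1) :=
    fun j => (subst_main ⟨hr0, hr1⟩ (hbb j) hs).1
  have hval : ∀ j : ℕ, (∫ τ in Set.Ioo (0:ℝ) 1,
      τ^(s-1) * (1-τ)^(-s) * (1-r^2*τ)^(-s) * (1-r^2*τ^2)
        / (1 - (2*r*Real.cos ((j:ℝ) * (2*Real.pi/n) - φ))*τ + r^2*τ^2))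
      = (1 + r^2 - 2*r*Real.cos ((j:ℝ) * (2*Real.pi/n) - φ))^(-s)
        * (Real.pi / Real.sin (Real.pi * s)) :=
    fun j => (subst_main ⟨hr0, hr1⟩ (hbb j) hs).2
  -- compute the integral
  have hI : (∫ τ in (0:ℝ)..1, (τ⁻¹ - 1) ^ (-β / 2) *
        (1 / (τ * (1 - r ^ 2 * τ) ^ (β / 2)) *
          ((1 - (r * τ) ^ (2 * n)) /
            (‖1 - (((τ * r : ℝ) : ℂ)
              * Complex.exp (-Complex.I * φ)) ^ n‖) ^ 2)))
      = (n:ℝ)⁻¹ * ∑ j ∈ Finset.Icc 1 n,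
          (1 + r^2 - 2*r*Real.cos ((j:ℝ) * (2*Real.pi/n) - φ))^(-s)
            * (Real.pi / Real.sin (Real.pi * s)) := by
    rw [intervalIntegral.integral_of_le zero_le_one,
      MeasureTheory.integral_Ioc_eq_integral_Ioo]
    rw [MeasureTheory.setIntegral_congr_fun measurableSet_Ioo
      (fun τ hτ => pointwise_id β r φ n ⟨hβ0, hβ2⟩ ⟨hr0, hr1⟩ hn τ hτ)]
    rw [MeasureTheory.integral_const_mul]
    congr 1
    rw [MeasureTheory.integral_finset_sum _ (fun j _ => hint j)]
    exact Finset.sum_congr rfl fun j _ => hval j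
  rw [hI]
  -- LHS terms
  have hLHS : ∀ j ∈ Finset.Icc 1 n,
      (‖(r : ℂ)
          - Complex.exp (Complex.I * ((j : ℝ) * (2 * Real.pi / n) - φ))‖) ^ (-β)
        = (1 + r^2 - 2*r*Real.cos ((j:ℝ) * (2*Real.pi/n) - φ))^(-s) := by
    intro j _
    rw [show Complex.I * ((((j:ℝ)):ℂ) * (2 * (Real.pi:ℂ) / ((n:ℕ):ℂ)) - ((φ:ℝ):ℂ))
        = Complex.I * ((((j:ℝ) * (2 * Real.pi / n) - φ : ℝ)) : ℂ) by push_cast; ring]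
    set A := ‖(r : ℂ)
      - Complex.exp (Complex.I * ((((j:ℝ) * (2 * Real.pi / n) - φ : ℝ)) : ℂ))‖ with hAdef
    have hA2 : A^2 = 1 + r^2 - 2*r*Real.cos ((j:ℝ) * (2*Real.pi/n) - φ) :=
      abs_sq_sub_exp r _
    have h1 : A ^ (-β) = A ^ ((2:ℝ) * -s) := by
      congr 1
      rw [hsdef]; ring
    rw [h1, Real.rpow_mul (norm_nonneg _) 2 (-s)]
    rw [show (A:ℝ) ^ (2:ℝ) = A ^ (2:ℕ) by rw [← Real.rpow_natCast A 2]; norm_num]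
    rw [hA2]
  rw [Finset.sum_congr rfl hLHS]
  -- final arithmetic
  have hsin : Real.sin (Real.pi * s) ≠ 0 := by
    apply ne_of_gt
    apply Real.sin_pos_of_pos_of_lt_pi
    · positivity
    · calc Real.pi * s < Real.pi * 1 := by
            apply mul_lt_mul_of_pos_left hs.2 Real.pi_pos
        _ = Real.pi := mul_one _
  have hπ : Real.pi ≠ 0 := Real.pi_ne_zero
  have hn0 : (n:ℝ) ≠ 0 := Nat.cast_ne_zero.2 (by omega)
  have hsin2 : Real.sin (Real.pi * β / 2) = Real.sin (Real.pi * s) := by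
    rw [hsdef]; ring_nf
  rw [hsin2, Finset.mul_sum, Finset.mul_sum]
  refine Finset.sum_congr rfl fun j _ => ?_
  field_simp
end

section
/- For n = 2, μ > 0, α > 1, and r > 1, the function h(r) = (r f(r) + s r) + μ(r - r^{-α}) with f(r) = -2(r²+1)^{-(α+1)/2} and s = 2^{1-α} a constant with s > 0, is strictly increasing in r (h'(r) > 0); hence h has at most one zero in (1, ∞). -/
theorem maxwell_n2_radial_monotone (α μ : ℝ) (hα : 1 < α) (hμ : 0 < μ) :
    let f : ℝ → ℝ := fun r => -2 * (r ^ 2 + 1) ^ (-(α + 1) / 2)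
    let s : ℝ := 2 ^ (1 - α)
    let h : ℝ → ℝ := fun r => (r * f r + s * r) + μ * (r - r ^ (-α))
    (∀ r : ℝ, 1 < r → 0 < deriv h r) ∧
      ∀ r₁ ∈ Set.Ioi (1 : ℝ), ∀ r₂ ∈ Set.Ioi (1 : ℝ),
        h r₁ = 0 → h r₂ = 0 → r₁ = r₂ := by
  intro f s h
  have hs : (0:ℝ) < s := Real.rpow_pos_of_pos two_pos _
  have key : ∀ r : ℝ, 1 < r →
      HasDerivAt h ((r ^ 2 + 1) ^ (-(α + 1) / 2 - 1) * (2 * (α * r ^ 2 - 1))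
        + s + μ * (1 + α * r ^ (-α - 1))) r := by
    intro r hr
    have hr0 : (0:ℝ) < r := lt_trans one_pos hr
    have hx : (0:ℝ) < r ^ 2 + 1 := by positivity
    have hg : HasDerivAt (fun r : ℝ => r ^ 2 + 1) (2 * r) r := by
      simpa using (hasDerivAt_pow 2 r).add_const 1
    have hp : HasDerivAt (fun r : ℝ => (r ^ 2 + 1) ^ (-(α + 1) / 2))
        ((-(α + 1) / 2) * (r ^ 2 + 1) ^ (-(α + 1) / 2 - 1) * (2 * r)) r :=
      by have := (Real.hasDerivAt_rpow_const (x := r ^ 2 + 1) (p := -(α + 1) / 2) (Or.inl hx.ne')).comp r hg; exact this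
    have hf : HasDerivAt f
        (-2 * ((-(α + 1) / 2) * (r ^ 2 + 1) ^ (-(α + 1) / 2 - 1) * (2 * r))) r :=
      hp.const_mul (-2)
    have h1 : HasDerivAt (fun r : ℝ => r * f r)
        (1 * f r + r * (-2 * ((-(α + 1) / 2) * (r ^ 2 + 1) ^ (-(α + 1) / 2 - 1) * (2 * r)))) r :=
      (hasDerivAt_id r).mul hf
    have h2 : HasDerivAt (fun r : ℝ => s * r) (s * 1) r := (hasDerivAt_id r).const_mul s
    have h3 : HasDerivAt (fun r : ℝ => r ^ (-α)) (-α * r ^ (-α - 1)) r :=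
      Real.hasDerivAt_rpow_const (Or.inl hr0.ne')
    have h4 : HasDerivAt (fun r : ℝ => μ * (r - r ^ (-α)))
        (μ * (1 - -α * r ^ (-α - 1))) r := ((hasDerivAt_id r).sub h3).const_mul μ
    have htot := (h1.add h2).add h4
    refine htot.congr_deriv ?_
    have hsplit : (r ^ 2 + 1) ^ (-(α + 1) / 2)
        = (r ^ 2 + 1) ^ (-(α + 1) / 2 - 1) * (r ^ 2 + 1) := by
      rw [← Real.rpow_add_one hx.ne']
      norm_num
    simp only [f]
    rw [hsplit]
    ring
  have hpos : ∀ r : ℝ, 1 < r →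
      0 < (r ^ 2 + 1) ^ (-(α + 1) / 2 - 1) * (2 * (α * r ^ 2 - 1))
        + s + μ * (1 + α * r ^ (-α - 1)) := by
    intro r hr
    have hr0 : (0:ℝ) < r := lt_trans one_pos hr
    have hx : (0:ℝ) < r ^ 2 + 1 := by positivity
    have hA : 0 < (r ^ 2 + 1) ^ (-(α + 1) / 2 - 1) := Real.rpow_pos_of_pos hx _
    have hB : 0 < α * r ^ 2 - 1 := by nlinarith
    have hC : 0 < r ^ (-α - 1) := Real.rpow_pos_of_pos hr0 _
    have hα0 : 0 < α := lt_trans one_pos hα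
    positivity
  have hderiv : ∀ r : ℝ, 1 < r → 0 < deriv h r := by
    intro r hr
    rw [(key r hr).deriv]
    exact hpos r hr
  refine ⟨hderiv, ?_⟩
  have hmono : StrictMonoOn h (Set.Ioi 1) := by
    apply strictMonoOn_of_deriv_pos (convex_Ioi 1)
    · exact fun x hx => ((key x hx).continuousAt).continuousWithinAt
    · intro x hx
      rw [interior_Ioi] at hx
      exact hderiv x hx
  intro r₁ hr₁ r₂ hr₂ hz₁ hz₂
  exact hmono.injOn hr₁ hr₂ (by rw [hz₁, hz₂])
end
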